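/- arXiv:2412.20198 — 6 statements merged into one kernel-verified Lean document; each statement's English description precedes it below -/
import Mathlib

section
/- For f integrable on [a,b] and 0 < α < 1, the right-sided Riemann-Liouville fractional derivative inverts the right-sided fractional integral: D^α_{b-}(I^α_{b-} f)(x) = f(x) for almost all x in [a,b]. -/
/-!
Writing `I = I^α_{b-} f`, Dirichlet's formula (Fubini on the triangle `z < y < t < b` together
with the Euler integral `∫_z^t (y - z)^{p-1} (t - y)^{q-1} dy = B(p, q) (t - z)^{p+q-1}`) gives
the semigroup law `I^{1-α}_{b-} I^α_{b-} f = I^1_{b-} f`, i.e.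
`∫_z^b I(y) (y - z)^{-α} dy = Γ(1 - α) ∫_z^b f`. Differentiating in `z` by the Lebesgue
differentiation theorem yields `-Γ(1 - α) f(z)` for almost every `z`.
-/

open MeasureTheory Set ProbabilityTheory

theorem Complex.betaIntegral_ofReal {p q : ℝ} (hp : 0 < p) (hq : 0 < q) :
    betaIntegral p q = beta p q := by
  rw [betaIntegral_eq_Gamma_mul_div _ _ (by simpa) (by simpa), beta, ← ofReal_add,
    Gamma_ofReal, Gamma_ofReal, Gamma_ofReal]
  push_cast
  ring

theorem integral_sub_rpow_mul_rpow_sub {p q z t : ℝ} (hp : 0 < p) (hq : 0 < q) (hzt : z < t) :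
    ∫ y in z..t, (y - z) ^ (p - 1) * (t - y) ^ (q - 1) = beta p q * (t - z) ^ (p + q - 1) := by
  have hc : 0 < t - z := sub_pos.mpr hzt
  have hscaled := Complex.betaIntegral_scaled p q hc
  rw [Complex.betaIntegral_ofReal hp hq] at hscaled
  have hshift : ∫ y in z..t, (y - z) ^ (p - 1) * (t - y) ^ (q - 1)
      = ∫ y in z..t, (y - z) ^ (p - 1) * (t - z - (y - z)) ^ (q - 1) := by
    simp only [sub_sub_sub_cancel_right]
  rw [hshift, intervalIntegral.integral_comp_sub_right
    (fun x => x ^ (p - 1) * (t - z - x) ^ (q - 1)) z, sub_self]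
  apply Complex.ofReal_injective
  rw [← intervalIntegral.integral_ofReal, Complex.ofReal_mul, Complex.ofReal_cpow hc.le, mul_comm]
  push_cast at hscaled ⊢
  rw [← hscaled]
  refine intervalIntegral.integral_congr fun x hx => ?_
  rw [uIcc_of_le hc.le] at hx
  rw [Complex.ofReal_cpow hx.1, Complex.ofReal_cpow (sub_nonneg.mpr hx.2)]
  push_cast
  ring

theorem intervalIntegrable_sub_rpow_mul_rpow_sub {p q z t : ℝ} (hp : 0 < p) (hq : 0 < q)
    (hzt : z < t) :
    IntervalIntegrable (fun y => (y - z) ^ (p - 1) * (t - y) ^ (q - 1)) volume z t := by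
  refine intervalIntegral.intervalIntegrable_of_integral_ne_zero ?_
  rw [integral_sub_rpow_mul_rpow_sub hp hq hzt]
  exact (mul_pos (beta_pos hp hq) (Real.rpow_pos_of_pos (sub_pos.mpr hzt) _)).ne'

theorem Set.Ioc_inter_Iio_of_le {z b t : ℝ} (htb : t ≤ b) : Ioc z b ∩ Iio t = Ioo z t := by
  ext y
  simp only [mem_inter_iff, mem_Ioc, mem_Iio, mem_Ioo]
  exact ⟨fun ⟨⟨hzy, _⟩, hyt⟩ => ⟨hzy, hyt⟩, fun ⟨hzy, hyt⟩ => ⟨⟨hzy, hyt.le.trans htb⟩, hyt⟩⟩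

theorem setIntegral_Ioc_indicator_Iio {E : Type*} [NormedAddCommGroup E] [NormedSpace ℝ E]
    {g : ℝ → E} {z b t : ℝ} (ht : t ∈ Ioc z b) :
    ∫ y in Ioc z b, (Iio t).indicator g y = ∫ y in z..t, g y := by
  rw [setIntegral_indicator measurableSet_Iio, Ioc_inter_Iio_of_le ht.2,
    setIntegral_congr_set Ioo_ae_eq_Ioc, intervalIntegral.integral_of_le ht.1.le]

theorem integrableOn_Ioc_indicator_Iio {E : Type*} [NormedAddCommGroup E]
    {g : ℝ → E} {z b t : ℝ} (ht : t ∈ Ioc z b) (hg : IntervalIntegrable g volume z t) :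
    IntegrableOn ((Iio t).indicator g) (Ioc z b) := by
  rw [IntegrableOn, integrable_indicator_iff measurableSet_Iio, IntegrableOn,
    Measure.restrict_restrict measurableSet_Iio, inter_comm, Ioc_inter_Iio_of_le ht.2]
  exact ((intervalIntegrable_iff_integrableOn_Ioc_of_le ht.1.le).mp hg).mono_set
    Ioo_subset_Ioc_self

theorem integral_Ioc_integral_Ioc_mul_rpow {f : ℝ → ℝ} {p q z b : ℝ} (hp : 0 < p) (hq : 0 < q)
    (hf : AEStronglyMeasurable f (volume.restrict (Ioc z b)))
    (hfw : IntegrableOn (fun t => f t * (t - z) ^ (p + q - 1)) (Ioc z b)) :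
    ∫ y in Ioc z b, (∫ t in Ioc y b, f t * (t - y) ^ (q - 1)) * (y - z) ^ (p - 1)
      = beta p q * ∫ t in Ioc z b, f t * (t - z) ^ (p + q - 1) := by
  set μ := volume.restrict (Ioc z b)
  set k : ℝ × ℝ → ℝ := {x | x.1 < x.2}.indicator
    fun x => (x.1 - z) ^ (p - 1) * (x.2 - x.1) ^ (q - 1)
  have hk_meas : Measurable k :=
    Measurable.indicator (by fun_prop) (measurableSet_lt measurable_fst measurable_snd)
  have hk_slice : ∀ t, (fun y => k (y, t)) =
      (Iio t).indicator fun y => (y - z) ^ (p - 1) * (t - y) ^ (q - 1) := fun t => rfl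
  have hk_integral : ∀ t ∈ Ioc z b, ∫ y, k (y, t) ∂μ = beta p q * (t - z) ^ (p + q - 1) :=
    fun t ht => by
      rw [hk_slice, setIntegral_Ioc_indicator_Iio ht, integral_sub_rpow_mul_rpow_sub hp hq ht.1]
  have hk_integrable : ∀ t ∈ Ioc z b, Integrable (fun y => k (y, t)) μ := fun t ht => by
    rw [hk_slice]
    exact integrableOn_Ioc_indicator_Iio ht (intervalIntegrable_sub_rpow_mul_rpow_sub hp hq ht.1)
  have hK_meas : AEStronglyMeasurable (fun x : ℝ × ℝ => f x.2 * k x) (μ.prod μ) :=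
    hf.comp_snd.mul hk_meas.aestronglyMeasurable
  have hK : Integrable (fun x : ℝ × ℝ => f x.2 * k x) (μ.prod μ) := by
    refine (integrable_prod_iff' hK_meas).mpr ⟨?_, ?_⟩
    · filter_upwards [ae_restrict_mem measurableSet_Ioc] with t ht
      exact (hk_integrable t ht).const_mul (f t)
    · refine (hfw.norm.mul_const (beta p q)).congr ?_
      filter_upwards [ae_restrict_mem measurableSet_Ioc] with t ht
      have hk_nonneg : ∀ᵐ y ∂μ, 0 ≤ k (y, t) := by
        filter_upwards [ae_restrict_mem measurableSet_Ioc] with y hy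
        rw [congrFun (hk_slice t) y, indicator_apply]
        split_ifs with hyt
        · exact mul_nonneg (Real.rpow_nonneg (sub_nonneg.mpr hy.1.le) _)
            (Real.rpow_nonneg (sub_nonneg.mpr (le_of_lt hyt)) _)
        · exact le_rfl
      simp only [norm_mul]
      rw [integral_const_mul, integral_congr_ae (hk_nonneg.mono fun y hy => Real.norm_of_nonneg hy),
        hk_integral t ht, Real.norm_of_nonneg (Real.rpow_nonneg (sub_nonneg.mpr ht.1.le) _)]
      ring
  calc ∫ y in Ioc z b, (∫ t in Ioc y b, f t * (t - y) ^ (q - 1)) * (y - z) ^ (p - 1)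
      = ∫ y, ∫ t, f t * k (y, t) ∂μ ∂μ := by
        refine setIntegral_congr_fun measurableSet_Ioc fun y hy => ?_
        have hk_slice' : (fun t => f t * k (y, t)) =
            (Ioi y).indicator fun t => f t * (t - y) ^ (q - 1) * (y - z) ^ (p - 1) := by
          ext t
          rw [congrFun (hk_slice t) y]
          simp only [indicator_apply, mem_Iio, mem_Ioi]
          split_ifs <;> ring
        rw [hk_slice', setIntegral_indicator measurableSet_Ioi, Ioc_inter_Ioi,
          max_eq_right hy.1.le, integral_mul_const]
    _ = ∫ t, ∫ y, f t * k (y, t) ∂μ ∂μ := integral_integral_swap hK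
    _ = ∫ t in Ioc z b, f t * (beta p q * (t - z) ^ (p + q - 1)) := by
        refine setIntegral_congr_fun measurableSet_Ioc fun t ht => ?_
        rw [integral_const_mul, hk_integral t ht]
    _ = beta p q * ∫ t in Ioc z b, f t * (t - z) ^ (p + q - 1) := by
        rw [← integral_const_mul]
        congr 1 with t
        ring

/-- The right-sided Riemann–Liouville integral `I^α_{b-} f` evaluated at `x`. -/
noncomputable def rightFracIntegral (α b : ℝ) (f : ℝ → ℝ) (x : ℝ) : ℝ :=
  1 / Real.Gamma α * ∫ y in x..b, f y * (y - x) ^ (α - 1)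

theorem rightFracIntegral_rightFracIntegral {f : ℝ → ℝ} {p q z b : ℝ} (hp : 0 < p) (hq : 0 < q)
    (hzb : z ≤ b) (hf : AEStronglyMeasurable f (volume.restrict (Ioc z b)))
    (hfw : IntegrableOn (fun t => f t * (t - z) ^ (p + q - 1)) (Ioc z b)) :
    rightFracIntegral p b (rightFracIntegral q b f) z = rightFracIntegral (p + q) b f z := by
  have hinner : ∀ y ∈ Ioc z b, rightFracIntegral q b f y * (y - z) ^ (p - 1)
      = 1 / Real.Gamma q * ((∫ t in Ioc y b, f t * (t - y) ^ (q - 1)) * (y - z) ^ (p - 1)) :=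
    fun y hy => by rw [rightFracIntegral, intervalIntegral.integral_of_le hy.2, mul_assoc]
  rw [rightFracIntegral, rightFracIntegral, intervalIntegral.integral_of_le hzb,
    intervalIntegral.integral_of_le hzb, setIntegral_congr_fun measurableSet_Ioc hinner,
    integral_const_mul, integral_Ioc_integral_Ioc_mul_rpow hp hq hf hfw, beta]
  have := (Real.Gamma_pos_of_pos hp).ne'
  have := (Real.Gamma_pos_of_pos hq).ne'
  field_simp

theorem integral_rightFracIntegral_mul_rpow_neg {f : ℝ → ℝ} {α z b : ℝ} (hα0 : 0 < α)
    (hα1 : α < 1) (hzb : z ≤ b) (hf : IntegrableOn f (Ioc z b)) :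
    ∫ y in z..b, rightFracIntegral α b f y * (y - z) ^ (-α)
      = Real.Gamma (1 - α) * ∫ y in z..b, f y := by
  have h := rightFracIntegral_rightFracIntegral (sub_pos.mpr hα1) hα0 hzb
    hf.aestronglyMeasurable (by simpa using hf)
  rw [sub_add_cancel, rightFracIntegral, rightFracIntegral, sub_sub_cancel_left] at h
  simp only [Real.Gamma_one, sub_self, Real.rpow_zero, mul_one, div_one, one_mul] at h
  rw [← h]
  have := (Real.Gamma_pos_of_pos (sub_pos.mpr hα1)).ne'
  field_simp

open Filter Topology in
/-- Right-sided Riemann–Liouville: `D^α_{b-} (I^α_{b-} f) = f` a.e. on `[a,b]`, `0 < α < 1`. -/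
theorem rl_right_deriv_integral (a b α : ℝ) (hab : a < b) (hα0 : 0 < α) (hα1 : α < 1)
    (f I D : ℝ → ℝ)
    (hf : IntegrableOn f (Set.Icc a b) volume)
    (hI : ∀ x, I x = (1 / Real.Gamma α) * ∫ y in x..b, f y * (y - x) ^ (α - 1))
    (hD : ∀ x, D x = -(1 / Real.Gamma (1 - α)) *
      deriv (fun z => ∫ y in z..b, I y * (y - z) ^ (-α)) x) :
    ∀ᵐ x ∂(volume.restrict (Set.Icc a b)), D x = f x := by
  have hI : I = rightFracIntegral α b f := funext hI
  have hsemigroup : ∀ z ∈ Ioo a b,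
      ∫ y in z..b, I y * (y - z) ^ (-α) = Real.Gamma (1 - α) * ∫ y in z..b, f y := fun z hz =>
    hI ▸ integral_rightFracIntegral_mul_rpow_neg hα0 hα1 hz.2.le
      (hf.mono_set (Ioc_subset_Icc_self.trans (Icc_subset_Icc_left hz.1.le)))
  have hfi : IntervalIntegrable f volume a b :=
    (intervalIntegrable_iff_integrableOn_Ioc_of_le hab.le).mpr (hf.mono_set Ioc_subset_Icc_self)
  have hIoo : ∀ᵐ x ∂(volume.restrict (Icc a b)), x ∈ Ioo a b := by
    rw [← Measure.restrict_congr_set Ioo_ae_eq_Icc]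
    exact ae_restrict_mem measurableSet_Ioo
  filter_upwards [ae_restrict_of_ae hfi.ae_hasDerivAt_integral, hIoo] with x hderiv hx
  have hxb : HasDerivAt (fun z => ∫ y in z..b, f y) (-f x) x := by
    simp_rw [intervalIntegral.integral_symm b]
    exact (hderiv (uIcc_of_le hab.le ▸ Ioo_subset_Icc_self hx) b right_mem_uIcc).neg
  have hlocal : (fun z => ∫ y in z..b, I y * (y - z) ^ (-α))
      =ᶠ[𝓝 x] fun z => Real.Gamma (1 - α) * ∫ y in z..b, f y :=
    eventually_of_mem (Ioo_mem_nhds hx.1 hx.2) hsemigroup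
  rw [hD, hlocal.deriv_eq, (hxb.const_mul _).deriv]
  field_simp [(Real.Gamma_pos_of_pos (sub_pos.mpr hα1)).ne']
end

section
/- Let 1 ≤ k ≤ n-1 and let f₀ : (0,1) → ℝ be measurable with ∫_0^{2b} |f₀(s)| s^{(k-1)/2} ds < ∞, where b = θₙ√(1-θₙ²) and 1/√2 ≤ θₙ < 1. Then for the zonal function f(x) = f₀(xₙ) on the half-ball, the integral of f over the k-chord tangent to the equator with center parameter θₙ equals π^{(k-1)/2} (1-θₙ²)^{-k/2} · (1/Γ((k+1)/2)) ∫_0^{2b} f₀(s) s^{(k-1)/2} (2b - s)^{(k-1)/2} ds. -/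
/-!
Split `ℝᵏ` isometrically as `ℝ ⊕₂ (ℝ ∙ p)ᗮ`, with `⟪η, p⟫` as first coordinate. By Cavalieri, the
image of Lebesgue measure on the unit ball under `η ↦ ⟪η, p⟫` has as density the volume of the
slice, a ball of radius `√(1 - t²)` in `(ℝ ∙ p)ᗮ`, that is `ω_{k-1} (1 - t²)^{(k-1)/2}` on `(-1, 1)`
with `ω_{k-1} = π^{(k-1)/2} / Γ((k+1)/2)`. The substitution `s = b (t + 1)` turns `1 - t²` into
`s (2b - s) / b²`, and `θₙᵏ / bᵏ = (1 - θₙ²)^{-k/2}` because `b = θₙ √(1 - θₙ²)`.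
-/

open MeasureTheory Set RealInnerProductSpace

open Metric Module

section Cavalieri

variable {F : Type*} [NormedAddCommGroup F] [InnerProductSpace ℝ F] [FiniteDimensional ℝ F]
  [MeasurableSpace F] [BorelSpace F]

theorem volume_ball_zero_one_of_finrank_eq {m : ℕ} (h : finrank ℝ F = m) :
    volume (ball (0 : F) 1) = ENNReal.ofReal (√Real.pi ^ m / Real.Gamma (m / 2 + 1)) := by
  have hrepr := ((stdOrthonormalBasis ℝ F).reindex (finCongr h)).repr.measurePreserving
  have hball := hrepr.measure_preimage (s := ball 0 1) measurableSet_ball.nullMeasurableSet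
  rw [LinearIsometryEquiv.preimage_ball, map_zero] at hball
  rw [hball]
  cases m with
  | zero => simp [volume_euclideanSpace_eq_dirac]
  | succ m => simp [EuclideanSpace.volume_ball]

theorem volume_ball_sqrt_one_sub_sq (t : ℝ) :
    volume (ball (0 : F) √(1 - t ^ 2)) = (Ioo (-1) 1).indicator (fun t ↦
      ENNReal.ofReal ((1 - t ^ 2) ^ ((finrank ℝ F : ℝ) / 2)) * volume (ball (0 : F) 1)) t := by
  by_cases ht : t ∈ Ioo (-1) 1
  · have h : 0 < 1 - t ^ 2 := by nlinarith [ht.1, ht.2]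
    rw [indicator_of_mem ht, Measure.addHaar_ball_of_pos _ _ (Real.sqrt_pos.2 h),
      Real.rpow_div_two_eq_sqrt _ h.le, Real.rpow_natCast]
  · have h : 1 - t ^ 2 ≤ 0 := by
      simp only [mem_Ioo, not_and_or, not_lt] at ht
      rcases ht with ht | ht <;> nlinarith
    rw [indicator_of_notMem ht, Real.sqrt_eq_zero'.2 h, ball_zero, measure_empty]

-- For `|t| ≥ 1` the density vanishes, since then `√(1 - t²) = 0` (junk value of `Real.sqrt`).
theorem map_fst_volume_restrict_ball :
    (volume.restrict (ball (0 : WithLp 2 (ℝ × F)) 1)).map WithLp.fst =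
      volume.withDensity (fun t ↦ volume (ball (0 : F) √(1 - t ^ 2))) := by
  ext s hs
  have hslice (t : ℝ) : volume (Prod.mk t ⁻¹'
      (WithLp.toLp 2 ⁻¹' (WithLp.fst ⁻¹' s ∩ ball (0 : WithLp 2 (ℝ × F)) 1))) =
        s.indicator (fun t ↦ volume (ball (0 : F) √(1 - t ^ 2))) t := by
    by_cases ht : t ∈ s
    · rw [indicator_of_mem ht]
      congr 1
      ext y
      simp only [preimage_inter, mem_inter_iff, mem_preimage, WithLp.fst, ht, true_and,
        mem_ball_zero_iff, Real.lt_sqrt (norm_nonneg _), ← sq_lt_one_iff₀ (norm_nonneg _),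
        WithLp.prod_norm_sq_eq_of_L2, WithLp.snd, Real.norm_eq_abs, sq_abs]
      constructor <;> intro h <;> linarith
    · rw [indicator_of_notMem ht]
      exact measure_mono_null (fun y hy ↦ ht hy.1) measure_empty
  rw [Measure.map_apply (by fun_prop) hs, Measure.restrict_apply (by measurability),
    withDensity_apply _ hs,
    ← (WithLp.volume_preserving_toLp ℝ F).measure_preimage (by measurability),
    Measure.volume_eq_prod, Measure.prod_apply (by measurability)]
  simp_rw [hslice]
  exact lintegral_indicator hs _

end Cavalieri

namespace LinearIsometryEquiv

variable {E : Type*} [NormedAddCommGroup E] [InnerProductSpace ℝ E]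

noncomputable def prodOrthogonalSpanSingleton (p : E) (hp : ‖p‖ = 1) :
    E ≃ₗᵢ[ℝ] WithLp 2 (ℝ × (ℝ ∙ p)ᗮ) :=
  (ℝ ∙ p).orthogonalDecomposition.trans
    (withLpProdCongr 2 (toSpanUnitSingleton p hp).symm (refl ℝ _))

theorem fst_prodOrthogonalSpanSingleton_apply (p : E) (hp : ‖p‖ = 1) (x : E) :
    (prodOrthogonalSpanSingleton p hp x).fst = ⟪x, p⟫ := by
  simp only [prodOrthogonalSpanSingleton, trans_apply, withLpProdCongr_apply]
  rw [WithLp.fst, WithLp.ofLp_toLp]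
  simp only [symm_apply_eq]
  ext
  simp [Submodule.starProjection_unit_singleton ℝ hp, real_inner_comm]

end LinearIsometryEquiv

section InnerProjection

variable {E : Type*} [NormedAddCommGroup E] [InnerProductSpace ℝ E] [FiniteDimensional ℝ E]
  [MeasurableSpace E] [BorelSpace E]

theorem map_inner_volume_restrict_ball (p : E) (hp : ‖p‖ = 1) :
    (volume.restrict (ball (0 : E) 1)).map (fun x ↦ ⟪x, p⟫) =
      volume.withDensity (fun t ↦ volume (ball (0 : (ℝ ∙ p)ᗮ) √(1 - t ^ 2))) := by
  set Φ := LinearIsometryEquiv.prodOrthogonalSpanSingleton p hp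
  have hΦ : MeasurePreserving Φ (volume.restrict (ball 0 1)) (volume.restrict (ball 0 1)) := by
    simpa [Φ.preimage_ball] using
      Φ.measurePreserving.restrict_preimage_emb Φ.toHomeomorph.measurableEmbedding (ball 0 1)
  have hcomp : (fun x ↦ ⟪x, p⟫) = WithLp.fst ∘ Φ :=
    funext fun x ↦ (LinearIsometryEquiv.fst_prodOrthogonalSpanSingleton_apply p hp x).symm
  rw [hcomp, ← Measure.map_map (by fun_prop) Φ.continuous.measurable, hΦ.map_eq,
    map_fst_volume_restrict_ball]

theorem integral_ball_comp_inner {G : Type*} [NormedAddCommGroup G] [NormedSpace ℝ G] {m : ℕ}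
    (hE : finrank ℝ E = m + 1) (p : E) (hp : ‖p‖ = 1) (g : ℝ → G)
    (hg : AEStronglyMeasurable g (volume.restrict (Ioo (-1) 1))) :
    ∫ x in ball (0 : E) 1, g ⟪x, p⟫ = (√Real.pi ^ m / Real.Gamma (m / 2 + 1)) •
      ∫ t in Ioo (-1) 1, (1 - t ^ 2) ^ ((m : ℝ) / 2) • g t := by
  set c := √Real.pi ^ m / Real.Gamma (m / 2 + 1)
  have hc : 0 ≤ c := div_nonneg (by positivity) (Real.Gamma_pos_of_pos (by positivity)).le
  have hF : finrank ℝ (ℝ ∙ p)ᗮ = m :=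
    haveI : Fact (finrank ℝ E = m + 1) := ⟨hE⟩
    Submodule.finrank_orthogonal_span_singleton (norm_ne_zero_iff.1 (by simp [hp]))
  have hmap : (volume.restrict (ball (0 : E) 1)).map (fun x ↦ ⟪x, p⟫) =
      (volume.restrict (Ioo (-1) 1)).withDensity
        (fun t ↦ ENNReal.ofReal ((1 - t ^ 2) ^ ((m : ℝ) / 2) * c)) := by
    rw [map_inner_volume_restrict_ball p hp, ← withDensity_indicator measurableSet_Ioo]
    congr 1
    funext t
    rw [volume_ball_sqrt_one_sub_sq, volume_ball_zero_one_of_finrank_eq hF, hF]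
    congr 1
    funext s
    exact (ENNReal.ofReal_mul' hc).symm
  rw [← integral_map (by fun_prop) (hmap ▸ hg.mono_ac (withDensity_absolutelyContinuous _ _)),
    hmap, integral_withDensity_eq_integral_toReal_smul (by fun_prop)
      (ae_of_all _ fun _ ↦ ENNReal.ofReal_lt_top), ← integral_smul]
  refine setIntegral_congr_fun measurableSet_Ioo fun t ht ↦ ?_
  have h : 0 < 1 - t ^ 2 := by nlinarith [ht.1, ht.2]
  rw [ENNReal.toReal_ofReal (by positivity), smul_smul, mul_comm]

end InnerProjection

theorem integral_Ioo_one_sub_sq_rpow_mul_comp (a : ℝ) {b : ℝ} (hb : 0 < b) (f : ℝ → ℝ) :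
    ∫ t in Ioo (-1) 1, (1 - t ^ 2) ^ a * f (b * (t + 1)) =
      (b ^ (2 * a + 1))⁻¹ * ∫ s in 0..2 * b, f s * s ^ a * (2 * b - s) ^ a := by
  set F : ℝ → ℝ := fun s ↦ (s / b) ^ a * ((2 * b - s) / b) ^ a * f s
  have hF : ∀ t ∈ uIcc (-1 : ℝ) 1, (1 - t ^ 2) ^ a * f (b * (t + 1)) = F (b * t + b) := by
    intro t ht
    rw [uIcc_of_le (by norm_num)] at ht
    have h1 : (b * t + b) / b = 1 + t := by field_simp; ring
    have h2 : (2 * b - (b * t + b)) / b = 1 - t := by field_simp; ring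
    rw [show (1 : ℝ) - t ^ 2 = (1 + t) * (1 - t) by ring,
      Real.mul_rpow (by linarith [ht.1]) (by linarith [ht.2]), show b * (t + 1) = b * t + b by ring]
    simp only [F, h1, h2]
  have hF' : ∀ s ∈ uIcc 0 (2 * b),
      F s = (b ^ (2 * a))⁻¹ * (f s * s ^ a * (2 * b - s) ^ a) := by
    intro s hs
    rw [uIcc_of_le (by linarith)] at hs
    simp only [F]
    rw [Real.div_rpow hs.1 hb.le, Real.div_rpow (by linarith [hs.2]) hb.le, mul_comm 2 a,
      Real.rpow_mul hb.le, Real.rpow_two]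
    field_simp
  rw [← integral_Ioc_eq_integral_Ioo, ← intervalIntegral.integral_of_le (by norm_num),
    intervalIntegral.integral_congr hF, intervalIntegral.integral_comp_mul_add F hb.ne',
    mul_neg_one, neg_add_cancel, mul_one, ← two_mul, intervalIntegral.integral_congr hF',
    intervalIntegral.integral_const_mul, smul_eq_mul, Real.rpow_add hb, Real.rpow_one]
  ring

theorem aestronglyMeasurable_comp_mul_add_one {G : Type*} [TopologicalSpace G] {f : ℝ → G}
    {b : ℝ} (hb : 0 < b) (hf : AEStronglyMeasurable f (volume.restrict (Ioo 0 (2 * b)))) :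
    AEStronglyMeasurable (fun t ↦ f (b * (t + 1))) (volume.restrict (Ioo (-1) 1)) := by
  have hq : Measure.QuasiMeasurePreserving (fun t : ℝ ↦ b * (t + 1)) volume volume :=
    (Measure.quasiMeasurePreserving_smul volume hb.ne').comp
      (measurePreserving_add_right volume 1).quasiMeasurePreserving
  refine hf.comp_quasiMeasurePreserving (hq.restrict fun t ht ↦ ?_)
  constructor <;> nlinarith [ht.1, ht.2]

theorem tangent_chord_zonal_general (k : ℕ) (hk : 1 ≤ k)
    (θn : ℝ) (hθ : 1 / Real.sqrt 2 ≤ θn) (hθ1 : θn < 1)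
    (b : ℝ) (hb : b = θn * Real.sqrt (1 - θn ^ 2))
    (f₀ : ℝ → ℝ)
    (hf : IntegrableOn (fun s => f₀ s * s ^ (((k : ℝ) - 1) / 2)) (Set.Ioo 0 (2 * b)) volume)
    (p : EuclideanSpace ℝ (Fin k)) (hp : ‖p‖ = 1) :
    θn ^ k * ∫ η in Metric.ball (0 : EuclideanSpace ℝ (Fin k)) 1, f₀ (b * (⟪η, p⟫ + 1)) =
      Real.pi ^ (((k : ℝ) - 1) / 2) * (1 - θn ^ 2) ^ (-(k : ℝ) / 2) *
        (1 / Real.Gamma (((k : ℝ) + 1) / 2)) *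
        ∫ s in (0:ℝ)..(2 * b),
          f₀ s * s ^ (((k : ℝ) - 1) / 2) * (2 * b - s) ^ (((k : ℝ) - 1) / 2) := by
  obtain ⟨m, rfl⟩ : ∃ m, k = m + 1 := ⟨k - 1, by omega⟩
  have hθ0 : 0 < θn := lt_of_lt_of_le (by positivity) hθ
  have hu : 0 < 1 - θn ^ 2 := by nlinarith
  have hb0 : 0 < b := hb ▸ by positivity
  have ha : (((m + 1 : ℕ) : ℝ) - 1) / 2 = m / 2 := by push_cast; ring
  rw [ha] at hf ⊢
  have hf₀ : AEStronglyMeasurable f₀ (volume.restrict (Ioo 0 (2 * b))) := by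
    refine (hf.aestronglyMeasurable.mul
      (by fun_prop : Measurable fun s : ℝ ↦ s ^ (-((m : ℝ) / 2))).aestronglyMeasurable).congr
      (ae_restrict_of_forall_mem measurableSet_Ioo fun s hs ↦ ?_)
    rw [Pi.mul_apply, mul_assoc, ← Real.rpow_add hs.1, add_neg_cancel, Real.rpow_zero, mul_one]
  rw [integral_ball_comp_inner finrank_euclideanSpace_fin p hp (fun t ↦ f₀ (b * (t + 1)))
    (aestronglyMeasurable_comp_mul_add_one hb0 hf₀)]
  simp only [smul_eq_mul]
  rw [integral_Ioo_one_sub_sq_rpow_mul_comp _ hb0]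
  have hpow : (1 - θn ^ 2) ^ (-((m + 1 : ℕ) : ℝ) / 2) = (√(1 - θn ^ 2) ^ (m + 1))⁻¹ := by
    rw [neg_div, Real.rpow_neg hu.le, Real.rpow_div_two_eq_sqrt _ hu.le, Real.rpow_natCast]
  have hπ : Real.pi ^ ((m : ℝ) / 2) = √Real.pi ^ m := by
    rw [Real.rpow_div_two_eq_sqrt _ Real.pi_pos.le, Real.rpow_natCast]
  have hexp : 2 * ((m : ℝ) / 2) + 1 = ((m + 1 : ℕ) : ℝ) := by push_cast; ring
  have hΓ : (((m + 1 : ℕ) : ℝ) + 1) / 2 = m / 2 + 1 := by push_cast; ring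
  rw [hpow, hπ, hexp, Real.rpow_natCast, hΓ, hb, mul_pow]
  field_simp

/-- Lemma 4.2: the integral of the zonal function `f(x) = f₀(xₙ)` over a tangent
`k`-chord of the half-ball with center parameter `θₙ` (an `A`-chord, `1/√2 ≤ θₙ < 1`),
in the parametrization `(If)(θ,ξ) = θₙᵏ ∫_{Bᵏ} f₀(b(⟪η,p⟫+1)) dη`, equals a
Riemann–Liouville-type fractional integral. -/
theorem tangent_chord_zonal (n k : ℕ) (hk : 1 ≤ k) (hkn : k ≤ n - 1)
    (θn : ℝ) (hθ : 1 / Real.sqrt 2 ≤ θn) (hθ1 : θn < 1)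
    (b : ℝ) (hb : b = θn * Real.sqrt (1 - θn ^ 2))
    (f₀ : ℝ → ℝ)
    (hf : IntegrableOn (fun s => f₀ s * s ^ (((k : ℝ) - 1) / 2)) (Set.Ioo 0 (2 * b)) volume)
    (p : EuclideanSpace ℝ (Fin k)) (hp : ‖p‖ = 1) :
    θn ^ k * ∫ η in Metric.ball (0 : EuclideanSpace ℝ (Fin k)) 1, f₀ (b * (⟪η, p⟫ + 1)) =
      Real.pi ^ (((k : ℝ) - 1) / 2) * (1 - θn ^ 2) ^ (-(k : ℝ) / 2) *
        (1 / Real.Gamma (((k : ℝ) + 1) / 2)) *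
        ∫ s in (0:ℝ)..(2 * b),
          f₀ s * s ^ (((k : ℝ) - 1) / 2) * (2 * b - s) ^ (((k : ℝ) - 1) / 2) :=
  tangent_chord_zonal_general k hk θn hθ hθ1 b hb f₀ hf p hp
end

section
/- Let α > 0 and 1 ≤ k. Then (1/Γ((k+1)/2)) ∫_0^r (r-s)^{(k-1)/2} s^{α-1} (1-s)^{-α-(k+1)/2} ds = (Γ(α)/Γ(α+(k+1)/2)) · r^{α+(k-1)/2} (1-r)^{-α} for all 0 < r < 1. -/
/-!
Substituting `s = r w / (1 - r + r w)` maps `(0, 1)` onto `(0, r)` and factors each of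
`s`, `r - s`, `1 - s` and `ds` as a power of `r`, `1 - r`, `w` or `1 - w` over a power of
`1 - r + r w`. The powers of `1 - r + r w` cancel, leaving `r ^ (α + c - 1) (1 - r) ^ (-α)`
times the Beta integral `B(α, c) = Γ(α) Γ(c) / Γ(α + c)`, where `c = (k + 1) / 2`.
-/

open MeasureTheory Set

theorem Real.integral_rpow_mul_one_sub_rpow_eq_Gamma {a b : ℝ} (ha : 0 < a) (hb : 0 < b) :
    ∫ x in (0:ℝ)..1, x ^ (a - 1) * (1 - x) ^ (b - 1) =
      Real.Gamma a * Real.Gamma b / Real.Gamma (a + b) := by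
  have hbeta := Complex.Gamma_mul_Gamma_eq_betaIntegral
    (s := (a : ℂ)) (t := (b : ℂ)) (by simpa using ha) (by simpa using hb)
  have hreal : Complex.betaIntegral a b =
      ((∫ x in (0:ℝ)..1, x ^ (a - 1) * (1 - x) ^ (b - 1) : ℝ) : ℂ) := by
    rw [Complex.betaIntegral, ← intervalIntegral.integral_ofReal]
    refine intervalIntegral.integral_congr fun x hx => ?_
    rw [uIcc_of_le zero_le_one] at hx
    rw [Complex.ofReal_mul, Complex.ofReal_cpow hx.1, Complex.ofReal_cpow (sub_nonneg.2 hx.2)]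
    push_cast
    ring
  rw [hreal, Complex.Gamma_ofReal, Complex.Gamma_ofReal, ← Complex.ofReal_add,
    Complex.Gamma_ofReal, ← Complex.ofReal_mul, ← Complex.ofReal_mul, Complex.ofReal_inj] at hbeta
  rw [hbeta, mul_div_cancel_left₀ _ (Real.Gamma_pos_of_pos (add_pos ha hb)).ne']

noncomputable def chordSubst (r w : ℝ) : ℝ := r * w / (1 - r + r * w)

section ChordSubst

variable {r w : ℝ}

lemma chordSubst_denom_pos (hr0 : 0 < r) (hr1 : r < 1) (hw : 0 ≤ w) : 0 < 1 - r + r * w := by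
  nlinarith

lemma hasDerivAt_chordSubst (hD : 1 - r + r * w ≠ 0) :
    HasDerivAt (chordSubst r) (r * (1 - r) / (1 - r + r * w) ^ 2) w := by
  have h := ((hasDerivAt_id w).const_mul r).div
    (((hasDerivAt_id w).const_mul r).const_add (1 - r)) hD
  exact h.congr_deriv (by simp only [id]; ring)

lemma bijOn_chordSubst (hr0 : 0 < r) (hr1 : r < 1) :
    BijOn (chordSubst r) (Ioo 0 1) (Ioo 0 r) := by
  have h1r : 0 < 1 - r := by linarith
  refine InvOn.bijOn (f' := fun s => (1 - r) * s / (r * (1 - s))) ⟨?_, ?_⟩ ?_ ?_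
  · rintro w ⟨hw0, -⟩
    have hD := chordSubst_denom_pos hr0 hr1 hw0.le
    simp only [chordSubst]
    field_simp [h1r.ne']
    ring
  · rintro s ⟨-, hsr⟩
    have h1s : 0 < 1 - s := by linarith
    simp only [chordSubst]
    rw [show 1 - r + r * ((1 - r) * s / (r * (1 - s))) = (1 - r) / (1 - s) by field_simp; ring]
    field_simp
  · rintro w ⟨hw0, hw1⟩
    have hD := chordSubst_denom_pos hr0 hr1 hw0.le
    refine ⟨by unfold chordSubst; positivity, ?_⟩
    rw [chordSubst, div_lt_iff₀ hD]
    nlinarith [mul_pos (mul_pos hr0 h1r) (sub_pos.2 hw1)]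
  · rintro s ⟨hs0, hsr⟩
    have h1s : 0 < 1 - s := by linarith
    refine ⟨by positivity, show (1 - r) * s / (r * (1 - s)) < 1 from ?_⟩
    rw [div_lt_one (by positivity)]
    nlinarith

lemma sub_chordSubst (hD : 1 - r + r * w ≠ 0) :
    r - chordSubst r w = r * (1 - r) * (1 - w) / (1 - r + r * w) := by
  rw [chordSubst]
  field_simp
  ring

lemma one_sub_chordSubst (hD : 1 - r + r * w ≠ 0) :
    1 - chordSubst r w = (1 - r) / (1 - r + r * w) := by
  rw [chordSubst]
  field_simp
  ring

/-- The exponents of `1 - r + r w` add up to `-2 - (c - 1) - (a - 1) + (a + c) = 0`. -/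
lemma chordSubst_integrand_eq (a c : ℝ) (hr0 : 0 < r) (hr1 : r < 1) (hw0 : 0 < w) (hw1 : w < 1) :
    r * (1 - r) / (1 - r + r * w) ^ 2 *
      ((r * (1 - r) * (1 - w) / (1 - r + r * w)) ^ (c - 1) *
        (r * w / (1 - r + r * w)) ^ (a - 1) *
        ((1 - r) / (1 - r + r * w)) ^ (-a - c)) =
    r ^ (a + c - 1) * (1 - r) ^ (-a) * (w ^ (a - 1) * (1 - w) ^ (c - 1)) := by
  have h1r : 0 < 1 - r := by linarith
  have h1w : 0 < 1 - w := by linarith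
  have hD := chordSubst_denom_pos hr0 hr1 hw0.le
  rw [Real.div_rpow (by positivity) hD.le, Real.div_rpow (by positivity) hD.le,
    Real.div_rpow h1r.le hD.le, Real.mul_rpow (by positivity) h1w.le,
    Real.mul_rpow hr0.le h1r.le, Real.mul_rpow hr0.le hw0.le,
    ← Real.rpow_natCast (1 - r + r * w) 2,
    show r * (1 - r) = Real.exp (Real.log r + Real.log (1 - r)) by
      rw [Real.exp_add, Real.exp_log hr0, Real.exp_log h1r]]
  simp only [Real.rpow_def_of_pos hr0, Real.rpow_def_of_pos h1r, Real.rpow_def_of_pos hw0,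
    Real.rpow_def_of_pos h1w, Real.rpow_def_of_pos hD, ← Real.exp_add, ← Real.exp_sub]
  rw [Real.exp_eq_exp]
  push_cast
  ring

end ChordSubst

theorem integral_sub_rpow_mul_rpow_mul_one_sub_rpow {a c r : ℝ} (ha : 0 < a) (hc : 0 < c)
    (hr0 : 0 < r) (hr1 : r < 1) :
    ∫ s in (0:ℝ)..r, (r - s) ^ (c - 1) * s ^ (a - 1) * (1 - s) ^ (-a - c) =
      Real.Gamma a * Real.Gamma c / Real.Gamma (a + c) * (r ^ (a + c - 1) * (1 - r) ^ (-a)) := by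
  have hsubst : EqOn
      (fun w => |r * (1 - r) / (1 - r + r * w) ^ 2| •
        ((r - chordSubst r w) ^ (c - 1) * chordSubst r w ^ (a - 1) *
          (1 - chordSubst r w) ^ (-a - c)))
      (fun w => r ^ (a + c - 1) * (1 - r) ^ (-a) * (w ^ (a - 1) * (1 - w) ^ (c - 1)))
      (Ioo 0 1) := by
    rintro w ⟨hw0, hw1⟩
    have hD := chordSubst_denom_pos hr0 hr1 hw0.le
    have h1r : 0 < 1 - r := by linarith
    dsimp only
    rw [sub_chordSubst hD.ne', one_sub_chordSubst hD.ne', smul_eq_mul,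
      abs_of_pos (by positivity)]
    exact chordSubst_integrand_eq a c hr0 hr1 hw0 hw1
  rw [intervalIntegral.integral_of_le hr0.le, integral_Ioc_eq_integral_Ioo,
    ← (bijOn_chordSubst hr0 hr1).image_eq,
    integral_image_eq_integral_abs_deriv_smul measurableSet_Ioo
      (fun w hw => (hasDerivAt_chordSubst
        (chordSubst_denom_pos hr0 hr1 hw.1.le).ne').hasDerivWithinAt)
      (bijOn_chordSubst hr0 hr1).injOn,
    setIntegral_congr_fun measurableSet_Ioo hsubst, integral_const_mul,
    ← integral_Ioc_eq_integral_Ioo, ← intervalIntegral.integral_of_le zero_le_one,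
    Real.integral_rpow_mul_one_sub_rpow_eq_Gamma ha hc]
  ring

theorem chord_example_fractional_integral_general (k : ℕ) (α : ℝ) (hα : 0 < α)
    (r : ℝ) (hr0 : 0 < r) (hr1 : r < 1) :
    (1 / Real.Gamma (((k : ℝ) + 1) / 2)) *
      ∫ s in (0:ℝ)..r,
        (r - s) ^ (((k : ℝ) - 1) / 2) * s ^ (α - 1) * (1 - s) ^ (-α - ((k : ℝ) + 1) / 2) =
    Real.Gamma α / Real.Gamma (α + ((k : ℝ) + 1) / 2) *
      (r ^ (α + ((k : ℝ) - 1) / 2) * (1 - r) ^ (-α)) := by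
  set c : ℝ := ((k : ℝ) + 1) / 2 with hc_def
  have hc : 0 < c := by positivity
  rw [show ((k : ℝ) - 1) / 2 = c - 1 by rw [hc_def]; ring,
    integral_sub_rpow_mul_rpow_mul_one_sub_rpow hα hc hr0 hr1,
    show α + (c - 1) = α + c - 1 by ring]
  field_simp [(Real.Gamma_pos_of_pos hc).ne']

/-- Example 4.3 closed form: the Riemann–Liouville integral of order `(k+1)/2` of
`s ↦ s^{α-1}(1-s)^{-α-(k+1)/2}` equals `Γ(α)/Γ(α+(k+1)/2) · r^{α+(k-1)/2}(1-r)^{-α}`. -/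
theorem chord_example_fractional_integral (k : ℕ) (hk : 1 ≤ k) (α : ℝ) (hα : 0 < α)
    (r : ℝ) (hr0 : 0 < r) (hr1 : r < 1) :
    (1 / Real.Gamma (((k : ℝ) + 1) / 2)) *
      ∫ s in (0:ℝ)..r,
        (r - s) ^ (((k : ℝ) - 1) / 2) * s ^ (α - 1) * (1 - s) ^ (-α - ((k : ℝ) + 1) / 2) =
    Real.Gamma α / Real.Gamma (α + ((k : ℝ) + 1) / 2) *
      (r ^ (α + ((k : ℝ) - 1) / 2) * (1 - r) ^ (-α)) :=
  chord_example_fractional_integral_general k α hα r hr0 hr1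
end

section
/- Let 0 < α < π, a = cos α, 2 ≤ k, and let β ∈ (0, α). For a function f₀ with s ↦ f₀(s)(s - a)^{(k-3)/2} integrable on (a, cos(α-2β)), the slice integral (σ_{k-2}/σ_{k-1}) ∫_{-1}^1 f₀(u sin β sin(α-β) + cos β cos(α-β)) (1-u²)^{(k-3)/2} du equals (σ_{k-2}/σ_{k-1}) (sin β sin(α-β))^{2-k} ∫_{cos α}^{cos(α-2β)} f₀(s) (s - cos α)^{(k-3)/2} (cos(α-2β) - s)^{(k-3)/2} ds. -/
open MeasureTheory Set Real

/-!
The substitution `s = p u + q` with `p = sin β sin (α - β)` and `q = cos β cos (α - β)` maps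
`[-1, 1]` onto `[q - p, q + p] = [cos α, cos (α - 2β)]` (addition formulas for the cosine),
and `1 - u² = (s - (q - p)) ((q + p) - s) / p²`. The Jacobian `p⁻¹` and the factor `p^(-2e)`
combine into `p ^ (2 - k)` for `e = (k - 3) / 2`.
-/

lemma one_sub_sq_div_rpow_eq {p q s : ℝ} (hp : 0 < p) (hs : s ∈ Icc (q - p) (q + p)) (e : ℝ) :
    (1 - ((s - q) / p) ^ 2) ^ e = (p ^ 2) ^ (-e) * ((s - (q - p)) ^ e * (q + p - s) ^ e) := by
  have hlo : 0 ≤ s - (q - p) := by linarith [hs.1]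
  have hhi : 0 ≤ q + p - s := by linarith [hs.2]
  have hfactor : 1 - ((s - q) / p) ^ 2 = (s - (q - p)) * (q + p - s) / p ^ 2 := by
    field_simp
    ring
  rw [hfactor, div_rpow (mul_nonneg hlo hhi) (sq_nonneg p), mul_rpow hlo hhi,
    rpow_neg (sq_nonneg p)]
  field_simp

theorem integral_comp_mul_add_mul_one_sub_sq_rpow (f : ℝ → ℝ) {p : ℝ} (hp : 0 < p)
    (q e : ℝ) :
    ∫ u in (-1 : ℝ)..1, f (p * u + q) * (1 - u ^ 2) ^ e =
      p ^ (-(2 * e + 1)) *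
        ∫ s in (q - p)..(q + p), f s * (s - (q - p)) ^ e * (q + p - s) ^ e := by
  set g : ℝ → ℝ := fun s => f s * (1 - ((s - q) / p) ^ 2) ^ e
  have hjacobian : p ^ (-(2 * e + 1)) = p⁻¹ * (p ^ 2) ^ (-e) := by
    rw [← rpow_neg_one p, ← rpow_natCast p 2, ← rpow_mul hp.le, ← rpow_add hp]
    push_cast
    ring_nf
  calc ∫ u in (-1 : ℝ)..1, f (p * u + q) * (1 - u ^ 2) ^ e
      = ∫ u in (-1 : ℝ)..1, g (p * u + q) := by
        simp only [g, add_sub_cancel_right, mul_div_cancel_left₀ _ hp.ne']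
    _ = p⁻¹ * ∫ s in (q - p)..(q + p), g s := by
        rw [intervalIntegral.integral_comp_mul_add _ hp.ne', smul_eq_mul]
        congr 2 <;> ring
    _ = p⁻¹ * ∫ s in (q - p)..(q + p),
          (p ^ 2) ^ (-e) * (f s * (s - (q - p)) ^ e * (q + p - s) ^ e) := by
        congr 1
        refine intervalIntegral.integral_congr fun s hs => ?_
        rw [uIcc_of_le (by linarith)] at hs
        simp only [g, one_sub_sq_div_rpow_eq hp hs]
        ring
    _ = _ := by rw [intervalIntegral.integral_const_mul, hjacobian, mul_assoc]

theorem spherical_slice_change_of_variables_general (k : ℕ)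
    (α β : ℝ) (hαπ : α < Real.pi) (hβ0 : 0 < β) (hβα : β < α)
    (f₀ : ℝ → ℝ)
    (σk1 σk2 : ℝ) :
    σk2 / σk1 *
      ∫ u in (-1:ℝ)..1,
        f₀ (u * Real.sin β * Real.sin (α - β) + Real.cos β * Real.cos (α - β)) *
          (1 - u ^ 2) ^ (((k : ℝ) - 3) / 2) =
    σk2 / σk1 * (Real.sin β * Real.sin (α - β)) ^ (2 - (k : ℝ)) *
      ∫ s in (Real.cos α)..(Real.cos (α - 2 * β)),
        f₀ s * (s - Real.cos α) ^ (((k : ℝ) - 3) / 2) *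
          (Real.cos (α - 2 * β) - s) ^ (((k : ℝ) - 3) / 2) := by
  have hsinβ : 0 < sin β := sin_pos_of_pos_of_lt_pi hβ0 (by linarith)
  have hsinαβ : 0 < sin (α - β) := sin_pos_of_pos_of_lt_pi (by linarith) (by linarith)
  have hlower : cos β * cos (α - β) - sin β * sin (α - β) = cos α := by
    conv_rhs => rw [show α = β + (α - β) by ring, cos_add]
  have hupper : cos β * cos (α - β) + sin β * sin (α - β) = cos (α - 2 * β) := by
    rw [show α - 2 * β = (α - β) - β by ring, cos_sub (α - β) β]
    ring
  have hexponent : -(2 * (((k : ℝ) - 3) / 2) + 1) = 2 - (k : ℝ) := by ring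
  have hsubst := integral_comp_mul_add_mul_one_sub_sq_rpow f₀ (mul_pos hsinβ hsinαβ)
    (cos β * cos (α - β)) (((k : ℝ) - 3) / 2)
  rw [hlower, hupper, hexponent] at hsubst
  rw [mul_assoc, ← hsubst]
  congr 1
  refine intervalIntegral.integral_congr fun u _ => ?_
  simp only [mul_comm u, mul_assoc]

/-- Lemma 5.1 (upper case), change-of-variables identity for the tangent spherical slice
transform on the sphere: the slice integral over `u ∈ (-1,1)` equals an Abel-type integral
over `s ∈ (cos α, cos(α-2β))`. -/
theorem spherical_slice_change_of_variables (k : ℕ) (hk : 2 ≤ k)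
    (α β : ℝ) (hα0 : 0 < α) (hαπ : α < Real.pi) (hβ0 : 0 < β) (hβα : β < α)
    (f₀ : ℝ → ℝ)
    (hf : IntegrableOn (fun s => f₀ s * (s - Real.cos α) ^ (((k : ℝ) - 3) / 2))
      (Set.Ioo (Real.cos α) (Real.cos (α - 2 * β))) volume)
    (σk1 σk2 : ℝ)
    (hσ1 : σk1 = 2 * Real.pi ^ ((k : ℝ) / 2) / Real.Gamma ((k : ℝ) / 2))
    (hσ2 : σk2 = 2 * Real.pi ^ (((k : ℝ) - 1) / 2) / Real.Gamma (((k : ℝ) - 1) / 2)) :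
    σk2 / σk1 *
      ∫ u in (-1:ℝ)..1,
        f₀ (u * Real.sin β * Real.sin (α - β) + Real.cos β * Real.cos (α - β)) *
          (1 - u ^ 2) ^ (((k : ℝ) - 3) / 2) =
    σk2 / σk1 * (Real.sin β * Real.sin (α - β)) ^ (2 - (k : ℝ)) *
      ∫ s in (Real.cos α)..(Real.cos (α - 2 * β)),
        f₀ s * (s - Real.cos α) ^ (((k : ℝ) - 3) / 2) *
          (Real.cos (α - 2 * β) - s) ^ (((k : ℝ) - 3) / 2) :=
  spherical_slice_change_of_variables_general k α β hαπ hβ0 hβα f₀ σk1 σk2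
end

section
/- Let 2 ≤ k ≤ n-1 and β > 0. For the zonal function f(η) = ηₙ^{β+(1-k)/2} (1-ηₙ)^{-β-(k-1)/2} on the upper hemisphere, and θ ∈ S^{n-1} with 0 < θₙ < 1, the equatorially tangent slice mean satisfies: with b = θₙ√(1-θₙ²) and c̃ = Γ(k/2)/(π^{1/2}Γ((k-1)/2)), c̃ (2b)^{2-k} ∫_0^{2b} s^{β+(1-k)/2} (1-s)^{-β-(k-1)/2} s^{(k-3)/2} (2b-s)^{(k-3)/2} ds = (Γ(k/2)Γ(β)/(π^{1/2}Γ(β+(k-1)/2))) · (2b)^{β+(1-k)/2} (1-2b)^{-β}, for 2b < 1. -/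
/-!
The integrand equals `s^(β-1) (T-s)^(q-1) (1-s)^(-(β+q))` with `T = 2b` and `q = (k-1)/2`.
The Möbius substitution `s = T t / (1 - T + T t)` maps `(0,1)` onto `(0,T)` and turns this
Abel-type integral into `T^(β+q-1) (1-T)^(-β)` times the Beta integral `B(β, q)`, whose value
`Γ(β) Γ(q) / Γ(β+q)` cancels the factor `Γ(q)` of the normalising constant.
-/

open MeasureTheory Set

theorem integral_rpow_mul_one_sub_rpow {p q : ℝ} (hp : 0 < p) (hq : 0 < q) :
    ∫ t in (0:ℝ)..1, t ^ (p - 1) * (1 - t) ^ (q - 1) =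
      Real.Gamma p * Real.Gamma q / Real.Gamma (p + q) := by
  have h_beta : Complex.betaIntegral p q
      = ((∫ t in (0:ℝ)..1, t ^ (p - 1) * (1 - t) ^ (q - 1) : ℝ) : ℂ) := by
    rw [Complex.betaIntegral, ← intervalIntegral.integral_ofReal]
    refine intervalIntegral.integral_congr fun t ht => ?_
    rw [uIcc_of_le zero_le_one] at ht
    simp only [Complex.ofReal_mul, Complex.ofReal_cpow ht.1,
      Complex.ofReal_cpow (sub_nonneg.2 ht.2), Complex.ofReal_sub, Complex.ofReal_one]
  have h := Complex.Gamma_mul_Gamma_eq_betaIntegral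
    (s := (p:ℂ)) (t := (q:ℂ)) (by simpa using hp) (by simpa using hq)
  rw [h_beta, ← Complex.ofReal_add, Complex.Gamma_ofReal, Complex.Gamma_ofReal,
    Complex.Gamma_ofReal] at h
  have h_real : Real.Gamma p * Real.Gamma q
      = Real.Gamma (p + q) * ∫ t in (0:ℝ)..1, t ^ (p - 1) * (1 - t) ^ (q - 1) := by
    exact_mod_cast h
  rw [h_real, mul_div_cancel_left₀ _ (Real.Gamma_pos_of_pos (add_pos hp hq)).ne']

noncomputable def abelKernel (p q T s : ℝ) : ℝ :=
  s ^ (p - 1) * (T - s) ^ (q - 1) * (1 - s) ^ (-(p + q))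

noncomputable def abelMobius (T t : ℝ) : ℝ := T * t / (1 - T + T * t)

section AbelMobius

variable {T : ℝ}

lemma abelMobius_denom_pos (hT0 : 0 < T) (hT1 : T < 1) {t : ℝ} (ht : 0 < t) :
    0 < 1 - T + T * t := by
  nlinarith

lemma hasDerivAt_abelMobius (hT0 : 0 < T) (hT1 : T < 1) {t : ℝ} (ht : 0 < t) :
    HasDerivAt (abelMobius T) (T * (1 - T) / (1 - T + T * t) ^ 2) t := by
  have h_num : HasDerivAt (fun t : ℝ => T * t) T t := by
    simpa using (hasDerivAt_id t).const_mul T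
  have h_den : HasDerivAt (fun t : ℝ => 1 - T + T * t) T t := by
    simpa using h_num.const_add (1 - T)
  have h := h_num.div h_den (abelMobius_denom_pos hT0 hT1 ht).ne'
  rwa [show T * (1 - T + T * t) - T * t * T = T * (1 - T) by ring] at h

lemma injOn_abelMobius (hT0 : 0 < T) (hT1 : T < 1) : InjOn (abelMobius T) (Ioo 0 1) := by
  intro a ha c hc h
  rw [abelMobius, abelMobius, div_eq_div_iff (abelMobius_denom_pos hT0 hT1 ha.1).ne'
    (abelMobius_denom_pos hT0 hT1 hc.1).ne'] at h
  have h' : T * (1 - T) * a = T * (1 - T) * c := by linear_combination h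
  exact mul_left_cancel₀ (by nlinarith) h'

lemma abelMobius_image_Ioo (hT0 : 0 < T) (hT1 : T < 1) :
    abelMobius T '' Ioo 0 1 = Ioo 0 T := by
  ext s
  constructor
  · rintro ⟨t, ⟨ht0, ht1⟩, rfl⟩
    have hw := abelMobius_denom_pos hT0 hT1 ht0
    refine ⟨by unfold abelMobius; positivity, ?_⟩
    rw [abelMobius, div_lt_iff₀ hw]
    nlinarith [mul_pos (mul_pos hT0 (sub_pos.2 hT1)) (sub_pos.2 ht1)]
  · rintro ⟨hs0, hsT⟩
    have h1T : 0 < 1 - T := by linarith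
    have h1s : 0 < 1 - s := by linarith
    -- the inverse Möbius map
    refine ⟨(1 - T) * s / (T * (1 - s)), ⟨by positivity, ?_⟩, ?_⟩
    · rw [div_lt_one (by positivity)]
      nlinarith
    · have hw : 1 - T + T * ((1 - T) * s / (T * (1 - s))) = (1 - T) / (1 - s) := by
        field_simp
        ring
      rw [abelMobius, hw]
      field_simp

lemma abs_deriv_abelMobius_mul_abelKernel (hT0 : 0 < T) (hT1 : T < 1) (p q : ℝ) {t : ℝ}
    (ht0 : 0 < t) (ht1 : t < 1) :
    |T * (1 - T) / (1 - T + T * t) ^ 2| * abelKernel p q T (abelMobius T t) =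
      T ^ (p + q - 1) * (1 - T) ^ (-p) * (t ^ (p - 1) * (1 - t) ^ (q - 1)) := by
  have h1T : 0 < 1 - T := by linarith
  have h1t : 0 < 1 - t := by linarith
  have hw := abelMobius_denom_pos hT0 hT1 ht0
  have h_sub : T - abelMobius T t = T * (1 - T) * (1 - t) / (1 - T + T * t) := by
    unfold abelMobius; field_simp; ring
  have h_one_sub : 1 - abelMobius T t = (1 - T) / (1 - T + T * t) := by
    unfold abelMobius; field_simp; ring
  have h_jac : T * (1 - T) / (1 - T + T * t) ^ 2
      = Real.exp (Real.log T + Real.log (1 - T) - 2 * Real.log (1 - T + T * t)) := by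
    rw [Real.exp_sub, Real.exp_add, Real.exp_log hT0, Real.exp_log h1T, mul_comm 2,
      Real.exp_mul, Real.exp_log hw, Real.rpow_two]
  rw [abelKernel, h_sub, h_one_sub, abs_of_pos (by positivity), h_jac, abelMobius]
  -- all factors are positive, so the identity is linear in the logarithms
  rw [Real.rpow_def_of_pos (by positivity), Real.rpow_def_of_pos (by positivity),
    Real.rpow_def_of_pos (by positivity), Real.rpow_def_of_pos hT0, Real.rpow_def_of_pos h1T,
    Real.rpow_def_of_pos ht0, Real.rpow_def_of_pos h1t]
  simp only [← Real.exp_add]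
  congr 1
  rw [Real.log_div (by positivity) hw.ne', Real.log_div (by positivity) hw.ne',
    Real.log_div h1T.ne' hw.ne', Real.log_mul hT0.ne' ht0.ne',
    Real.log_mul (by positivity) h1t.ne', Real.log_mul hT0.ne' h1T.ne']
  ring

end AbelMobius

theorem integral_abelKernel {p q T : ℝ} (hp : 0 < p) (hq : 0 < q) (hT0 : 0 < T) (hT1 : T < 1) :
    ∫ s in (0:ℝ)..T, abelKernel p q T s =
      T ^ (p + q - 1) * (1 - T) ^ (-p) *
        (Real.Gamma p * Real.Gamma q / Real.Gamma (p + q)) := by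
  rw [intervalIntegral.integral_of_le hT0.le, integral_Ioc_eq_integral_Ioo,
    ← abelMobius_image_Ioo hT0 hT1,
    integral_image_eq_integral_abs_deriv_smul measurableSet_Ioo
      (fun t ht => (hasDerivAt_abelMobius hT0 hT1 ht.1).hasDerivWithinAt)
      (injOn_abelMobius hT0 hT1)]
  simp only [smul_eq_mul]
  rw [setIntegral_congr_fun measurableSet_Ioo
      fun t ht => abs_deriv_abelMobius_mul_abelKernel hT0 hT1 p q ht.1 ht.2,
    integral_const_mul, ← integral_Ioc_eq_integral_Ioo,
    ← intervalIntegral.integral_of_le zero_le_one, integral_rpow_mul_one_sub_rpow hp hq]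

theorem equatorial_slice_example_general (k : ℕ) (hk : 2 ≤ k)
    (β : ℝ) (hβ : 0 < β) (θn : ℝ) (hθ0 : 0 < θn) (hθ1 : θn < 1)
    (b : ℝ) (hb : b = θn * Real.sqrt (1 - θn ^ 2)) (h2b : 2 * b < 1) :
    Real.Gamma ((k : ℝ) / 2) / (Real.sqrt Real.pi * Real.Gamma (((k : ℝ) - 1) / 2)) *
        (2 * b) ^ (2 - (k : ℝ)) *
      ∫ s in (0:ℝ)..(2 * b),
        s ^ (β + (1 - (k : ℝ)) / 2) * (1 - s) ^ (-β - ((k : ℝ) - 1) / 2) *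
          s ^ (((k : ℝ) - 3) / 2) * (2 * b - s) ^ (((k : ℝ) - 3) / 2) =
    Real.Gamma ((k : ℝ) / 2) * Real.Gamma β /
        (Real.sqrt Real.pi * Real.Gamma (β + ((k : ℝ) - 1) / 2)) *
      ((2 * b) ^ (β + (1 - (k : ℝ)) / 2) * (1 - 2 * b) ^ (-β)) := by
  have hq : 0 < ((k : ℝ) - 1) / 2 := by
    have : (2 : ℝ) ≤ k := by exact_mod_cast hk
    linarith
  set q : ℝ := ((k : ℝ) - 1) / 2
  have hT0 : 0 < 2 * b := by
    rw [hb]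
    have : 0 < Real.sqrt (1 - θn ^ 2) := Real.sqrt_pos.2 (by nlinarith)
    positivity
  have h_integrand : EqOn (fun s ↦ s ^ (β + (1 - (k : ℝ)) / 2) * (1 - s) ^ (-β - q) *
      s ^ (((k : ℝ) - 3) / 2) * (2 * b - s) ^ (((k : ℝ) - 3) / 2))
      (abelKernel β q (2 * b)) (Ioo 0 (2 * b)) := by
    rintro s ⟨hs0, -⟩
    dsimp only
    rw [abelKernel, mul_right_comm _ _ (s ^ _), ← Real.rpow_add hs0,
      show β + (1 - (k : ℝ)) / 2 + ((k : ℝ) - 3) / 2 = β - 1 by ring,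
      show ((k : ℝ) - 3) / 2 = q - 1 by ring, show -β - q = -(β + q) by ring]
    ring
  rw [intervalIntegral.integral_congr_Ioo_of_le hT0.le h_integrand,
    integral_abelKernel hβ hq hT0 h2b]
  have h_pow : (2 * b) ^ (2 - (k : ℝ)) * (2 * b) ^ (β + q - 1)
      = (2 * b) ^ (β + (1 - (k : ℝ)) / 2) := by
    rw [← Real.rpow_add hT0]
    congr 1
    ring
  have hΓq := (Real.Gamma_pos_of_pos hq).ne'
  have hΓβq := (Real.Gamma_pos_of_pos (add_pos hβ hq)).ne'
  have hπ := (Real.sqrt_pos.2 Real.pi_pos).ne'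
  rw [← h_pow]
  field_simp

/-- Example 5.4 closed form: the equatorially tangent slice mean of the zonal function
`f(η) = ηₙ^{β+(1-k)/2}(1-ηₙ)^{-β-(k-1)/2}` in its one-dimensional Abel-integral form. -/
theorem equatorial_slice_example (n k : ℕ) (hk : 2 ≤ k) (hkn : k ≤ n - 1)
    (β : ℝ) (hβ : 0 < β) (θn : ℝ) (hθ0 : 0 < θn) (hθ1 : θn < 1)
    (b : ℝ) (hb : b = θn * Real.sqrt (1 - θn ^ 2)) (h2b : 2 * b < 1) :
    Real.Gamma ((k : ℝ) / 2) / (Real.sqrt Real.pi * Real.Gamma (((k : ℝ) - 1) / 2)) *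
        (2 * b) ^ (2 - (k : ℝ)) *
      ∫ s in (0:ℝ)..(2 * b),
        s ^ (β + (1 - (k : ℝ)) / 2) * (1 - s) ^ (-β - ((k : ℝ) - 1) / 2) *
          s ^ (((k : ℝ) - 3) / 2) * (2 * b - s) ^ (((k : ℝ) - 3) / 2) =
    Real.Gamma ((k : ℝ) / 2) * Real.Gamma β /
        (Real.sqrt Real.pi * Real.Gamma (β + ((k : ℝ) - 1) / 2)) *
      ((2 * b) ^ (β + (1 - (k : ℝ)) / 2) * (1 - 2 * b) ^ (-β)) :=
  equatorial_slice_example_general k hk β hβ θn hθ0 hθ1 b hb h2b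
end

section
/- Let 0 ≤ α < ∞, a = cosh α, 2 ≤ k, 0 < β. For f₀ with s ↦ f₀(s)(s - cosh α)^{(k-3)/2} integrable, the slice integral (σ_{k-2}/σ_{k-1}) ∫_{-1}^1 f₀(u sinh β sinh(α+β) + cosh β cosh(α+β)) (1-u²)^{(k-3)/2} du equals (σ_{k-2}/σ_{k-1}) (sinh β sinh(α+β))^{2-k} ∫_{cosh α}^{cosh(α+2β)} f₀(s) (s - cosh α)^{(k-3)/2} (cosh(α+2β) - s)^{(k-3)/2} ds. -/
open MeasureTheory Set

/-!
The affine map `u ↦ c u + d` sends `[-1, 1]` onto `[d - c, d + c]`, and for `s = c u + d`,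
`1 - u² = (1 + u)(1 - u) = c⁻² (s - (d - c)) ((d + c) - s)`. For the slice through the
hyperboloid, `d ∓ c = cosh β cosh (α + β) ∓ sinh β sinh (α + β)` are `cosh α` and
`cosh (α + 2β)` by the addition formulas.
-/

section AffineChange

variable {c d p : ℝ}

lemma one_sub_sq_rpow_eq_of_affine (hc : 0 < c) {u : ℝ} (hu : u ∈ Icc (-1 : ℝ) 1) :
    (1 - u ^ 2) ^ p = c ^ (-(2 * p)) * ((c * u + d - (d - c)) ^ p * (d + c - (c * u + d)) ^ p) := by
  have h1u : 0 ≤ 1 + u := by linarith [hu.1]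
  have h2u : 0 ≤ 1 - u := by linarith [hu.2]
  have hcancel : c ^ (-(2 * p)) * (c ^ p * c ^ p) = 1 := by
    rw [← Real.rpow_add hc, ← Real.rpow_add hc, show -(2 * p) + (p + p) = 0 by ring,
      Real.rpow_zero]
  rw [show c * u + d - (d - c) = c * (1 + u) by ring,
    show d + c - (c * u + d) = c * (1 - u) by ring, show 1 - u ^ 2 = (1 + u) * (1 - u) by ring,
    Real.mul_rpow hc.le h1u, Real.mul_rpow hc.le h2u, Real.mul_rpow h1u h2u]
  linear_combination (-((1 + u) ^ p * (1 - u) ^ p)) * hcancel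

theorem integral_comp_affine_mul_one_sub_sq_rpow (hc : 0 < c) (g : ℝ → ℝ) :
    ∫ u in (-1 : ℝ)..1, g (c * u + d) * (1 - u ^ 2) ^ p =
      c ^ (-(2 * p) - 1) *
        ∫ s in (d - c)..(d + c), g s * (s - (d - c)) ^ p * (d + c - s) ^ p := by
  have hweight : EqOn (fun u => g (c * u + d) * (1 - u ^ 2) ^ p)
      (fun u => c ^ (-(2 * p)) *
        (g (c * u + d) * (c * u + d - (d - c)) ^ p * (d + c - (c * u + d)) ^ p))
      (uIcc (-1) 1) := by
    intro u hu
    rw [uIcc_of_le (by norm_num)] at hu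
    dsimp only
    rw [one_sub_sq_rpow_eq_of_affine (d := d) hc hu]
    ring
  rw [intervalIntegral.integral_congr hweight, intervalIntegral.integral_const_mul,
    intervalIntegral.integral_comp_mul_add (fun s => g s * (s - (d - c)) ^ p * (d + c - s) ^ p)
      hc.ne', smul_eq_mul, ← mul_assoc, Real.rpow_sub hc, Real.rpow_one, div_eq_mul_inv]
  congr 2 <;> ring

end AffineChange

lemma Real.cosh_mul_cosh_add_sinh_mul_sinh_add (α β : ℝ) :
    Real.cosh β * Real.cosh (α + β) + Real.sinh β * Real.sinh (α + β) =
      Real.cosh (α + 2 * β) := by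
  rw [show α + 2 * β = (α + β) + β by ring, Real.cosh_add (α + β) β]
  ring

lemma Real.cosh_mul_cosh_add_sub_sinh_mul_sinh_add (α β : ℝ) :
    Real.cosh β * Real.cosh (α + β) - Real.sinh β * Real.sinh (α + β) = Real.cosh α := by
  rw [show Real.cosh α = Real.cosh ((α + β) - β) by ring_nf, Real.cosh_sub]
  ring

theorem hyperbolic_slice_change_of_variables_general (k : ℕ)
    (α β : ℝ) (hα0 : 0 ≤ α) (hβ0 : 0 < β)
    (f₀ : ℝ → ℝ)
    (σk1 σk2 : ℝ) :
    σk2 / σk1 *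
      ∫ u in (-1:ℝ)..1,
        f₀ (u * Real.sinh β * Real.sinh (α + β) + Real.cosh β * Real.cosh (α + β)) *
          (1 - u ^ 2) ^ (((k : ℝ) - 3) / 2) =
    σk2 / σk1 * (Real.sinh β * Real.sinh (α + β)) ^ (2 - (k : ℝ)) *
      ∫ s in (Real.cosh α)..(Real.cosh (α + 2 * β)),
        f₀ s * (s - Real.cosh α) ^ (((k : ℝ) - 3) / 2) *
          (Real.cosh (α + 2 * β) - s) ^ (((k : ℝ) - 3) / 2) := by
  have hc : 0 < Real.sinh β * Real.sinh (α + β) :=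
    mul_pos (Real.sinh_pos_iff.mpr hβ0) (Real.sinh_pos_iff.mpr (by linarith))
  have hslice := integral_comp_affine_mul_one_sub_sq_rpow (d := Real.cosh β * Real.cosh (α + β))
    (p := ((k : ℝ) - 3) / 2) hc f₀
  rw [Real.cosh_mul_cosh_add_sub_sinh_mul_sinh_add, Real.cosh_mul_cosh_add_sinh_mul_sinh_add,
    show -(2 * (((k : ℝ) - 3) / 2)) - 1 = 2 - k by ring] at hslice
  simp_rw [show ∀ u : ℝ,
      u * Real.sinh β * Real.sinh (α + β) = Real.sinh β * Real.sinh (α + β) * u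
    from fun u => by ring]
  rw [hslice, mul_assoc]

/-- Theorem 6.1 (exterior case), hyperbolic change-of-variables identity for the tangent
slice transform on the hyperboloid. -/
theorem hyperbolic_slice_change_of_variables (k : ℕ) (hk : 2 ≤ k)
    (α β : ℝ) (hα0 : 0 ≤ α) (hβ0 : 0 < β)
    (f₀ : ℝ → ℝ)
    (hf : IntegrableOn
      (fun s => f₀ s * (s - Real.cosh α) ^ (((k : ℝ) - 3) / 2) *
        (Real.cosh (α + 2 * β) - s) ^ (((k : ℝ) - 3) / 2))
      (Set.Ioo (Real.cosh α) (Real.cosh (α + 2 * β))) volume)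
    (σk1 σk2 : ℝ)
    (hσ1 : σk1 = 2 * Real.pi ^ ((k : ℝ) / 2) / Real.Gamma ((k : ℝ) / 2))
    (hσ2 : σk2 = 2 * Real.pi ^ (((k : ℝ) - 1) / 2) / Real.Gamma (((k : ℝ) - 1) / 2)) :
    σk2 / σk1 *
      ∫ u in (-1:ℝ)..1,
        f₀ (u * Real.sinh β * Real.sinh (α + β) + Real.cosh β * Real.cosh (α + β)) *
          (1 - u ^ 2) ^ (((k : ℝ) - 3) / 2) =
    σk2 / σk1 * (Real.sinh β * Real.sinh (α + β)) ^ (2 - (k : ℝ)) *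
      ∫ s in (Real.cosh α)..(Real.cosh (α + 2 * β)),
        f₀ s * (s - Real.cosh α) ^ (((k : ℝ) - 3) / 2) *
          (Real.cosh (α + 2 * β) - s) ^ (((k : ℝ) - 3) / 2) :=
  hyperbolic_slice_change_of_variables_general k α β hα0 hβ0 f₀ σk1 σk2
end
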